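/- Let ζ, θ, ω, p, q : ℝ → ℝ be differentiable with, for all t: sin(ζ t) ≠ 0, sin(θ t) ≠ 0, ω′(t) = √(ζ′(t)²·sin(θ t)² + θ′(t)²), p′(t) = sin(ω t)/(sin(ζ t)·sin(θ t)), q′(t) = cos(ω t)/(sin(ζ t)·sin(θ t)). Define G : ℝ² → ℝ² by G(t,s) = (p t − s·sin(ω t), q t − s·cos(ω t)). Then at every (t,s): ‖∂G/∂t‖² = 1/(sin(ζ t)²·sin(θ t)²) + s²·(ζ′(t)²·sin(θ t)² + θ′(t)²), ⟨∂G/∂t, ∂G/∂s⟩ = −1/(sin(ζ t)·sin(θ t)), and ‖∂G/∂s‖ = 1. -/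

import Mathlib

open Real
open scoped RealInnerProductSpace

/-- Euler's parametrization of the planar figure onto which a developable surface
is unfolded. -/
noncomputable def eulerG (ω p q : ℝ → ℝ) (w : ℝ × ℝ) : EuclideanSpace ℝ (Fin 2) :=
  WithLp.toLp 2 ![p w.1 - w.2 * sin (ω w.1),
    q w.1 - w.2 * cos (ω w.1)]

/-!
With `u = (sin ω, cos ω)` and `u⊥ = (-cos ω, sin ω)`, an orthonormal frame along the unfolded
edge of regression, the partial derivatives of `G` are `∂G/∂s = -u` and
`∂G/∂t = u / (sin ζ sin θ) + s ω' u⊥`. Orthonormality of the frame gives the coefficients of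
the first fundamental form at once, and `ω'² = ζ'² sin² θ + θ'²` by the hypothesis on `ω'`.
-/

namespace EuclideanSpace

theorem norm_sq_toLp_fin_two (a b : ℝ) :
    ‖(WithLp.toLp 2 ![a, b] : EuclideanSpace ℝ (Fin 2))‖ ^ 2 = a ^ 2 + b ^ 2 := by
  simp [real_norm_sq_eq, Fin.sum_univ_two]

theorem inner_toLp_fin_two (a b c d : ℝ) :
    ⟪(WithLp.toLp 2 ![a, b] : EuclideanSpace ℝ (Fin 2)), WithLp.toLp 2 ![c, d]⟫ =
      a * c + b * d := by
  simp [PiLp.inner_apply, Fin.sum_univ_two, mul_comm]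

end EuclideanSpace

theorem HasDerivAt.toLp_fin_two {f g : ℝ → ℝ} {f' g' x : ℝ}
    (hf : HasDerivAt f f' x) (hg : HasDerivAt g g' x) :
    HasDerivAt (fun y => (WithLp.toLp 2 ![f y, g y] : EuclideanSpace ℝ (Fin 2)))
      (WithLp.toLp 2 ![f', g']) x :=
  (PiLp.hasFDerivAt_toLp 2 _).comp_hasDerivAt x
    (hasDerivAt_pi (φ' := ![f', g']) |>.2 <| Fin.forall_fin_two.2 ⟨hf, hg⟩)

section eulerG

variable {ω p q : ℝ → ℝ} {t s : ℝ}

theorem hasDerivAt_eulerG_fst {ω' p' q' : ℝ} (hω : HasDerivAt ω ω' t)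
    (hp : HasDerivAt p p' t) (hq : HasDerivAt q q' t) :
    HasDerivAt (fun t' => eulerG ω p q (t', s))
      (WithLp.toLp 2 ![p' - s * ω' * cos (ω t), q' + s * ω' * sin (ω t)]) t :=
  HasDerivAt.toLp_fin_two
    ((hp.sub (hω.sin.const_mul s)).congr_deriv (by ring))
    ((hq.sub (hω.cos.const_mul s)).congr_deriv (by ring))

theorem hasDerivAt_eulerG_snd :
    HasDerivAt (fun s' => eulerG ω p q (t, s'))
      (WithLp.toLp 2 ![-sin (ω t), -cos (ω t)]) s :=
  HasDerivAt.toLp_fin_two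
    ((((hasDerivAt_id s).mul_const (sin (ω t))).const_sub (p t)).congr_deriv (by simp))
    ((((hasDerivAt_id s).mul_const (cos (ω t))).const_sub (q t)).congr_deriv (by simp))

theorem eulerG_first_fundamental_form {k w : ℝ} (hω : HasDerivAt ω w t)
    (hp : HasDerivAt p (sin (ω t) / k) t) (hq : HasDerivAt q (cos (ω t) / k) t) :
    ‖deriv (fun t' => eulerG ω p q (t', s)) t‖ ^ 2 = 1 / k ^ 2 + s ^ 2 * w ^ 2 ∧
      ⟪deriv (fun t' => eulerG ω p q (t', s)) t, deriv (fun s' => eulerG ω p q (t, s')) s⟫ =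
        -1 / k ∧
      ‖deriv (fun s' => eulerG ω p q (t, s')) s‖ = 1 := by
  rw [(hasDerivAt_eulerG_fst hω hp hq).deriv, hasDerivAt_eulerG_snd.deriv]
  have hu := sin_sq_add_cos_sq (ω t)
  refine ⟨?_, ?_, ?_⟩
  · rw [EuclideanSpace.norm_sq_toLp_fin_two]
    linear_combination (1 / k ^ 2 + s ^ 2 * w ^ 2) * hu
  · rw [EuclideanSpace.inner_toLp_fin_two]
    linear_combination (-1 / k) * hu
  · rw [← pow_eq_one_iff_of_nonneg (norm_nonneg _) two_ne_zero,
      EuclideanSpace.norm_sq_toLp_fin_two]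
    linear_combination hu

end eulerG

theorem euler_first_fundamental_form_of_unfolded_figure_general
    (ζ θ ω p q : ℝ → ℝ)
    (hω : Differentiable ℝ ω)
    (hp : Differentiable ℝ p) (hq : Differentiable ℝ q)
    (hω' : ∀ t, deriv ω t = Real.sqrt ((deriv ζ t) ^ 2 * (sin (θ t)) ^ 2 + (deriv θ t) ^ 2))
    (hp' : ∀ t, deriv p t = sin (ω t) / (sin (ζ t) * sin (θ t)))
    (hq' : ∀ t, deriv q t = cos (ω t) / (sin (ζ t) * sin (θ t))) :
    ∀ t s : ℝ,
      ‖deriv (fun t' => eulerG ω p q (t', s)) t‖ ^ 2 =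
        1 / ((sin (ζ t)) ^ 2 * (sin (θ t)) ^ 2) +
          s ^ 2 * ((deriv ζ t) ^ 2 * (sin (θ t)) ^ 2 + (deriv θ t) ^ 2) ∧
      (⟪deriv (fun t' => eulerG ω p q (t', s)) t,
         deriv (fun s' => eulerG ω p q (t, s')) s⟫ : ℝ) =
        -1 / (sin (ζ t) * sin (θ t)) ∧
      ‖deriv (fun s' => eulerG ω p q (t, s')) s‖ = 1 := by
  intro t s
  have hω_sq : deriv ω t ^ 2 = deriv ζ t ^ 2 * sin (θ t) ^ 2 + deriv θ t ^ 2 := by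
    rw [hω' t, sq_sqrt (by positivity)]
  obtain ⟨hE, hF, hG⟩ := eulerG_first_fundamental_form (s := s) (hω t).hasDerivAt
    ((hp t).hasDerivAt.congr_deriv (hp' t)) ((hq t).hasDerivAt.congr_deriv (hq' t))
  exact ⟨by rw [hE, hω_sq, mul_pow], hF, hG⟩

theorem euler_first_fundamental_form_of_unfolded_figure
    (ζ θ ω p q : ℝ → ℝ)
    (hζ : Differentiable ℝ ζ) (hθ : Differentiable ℝ θ) (hω : Differentiable ℝ ω)
    (hp : Differentiable ℝ p) (hq : Differentiable ℝ q)
    (hsinζ : ∀ t, sin (ζ t) ≠ 0) (hsinθ : ∀ t, sin (θ t) ≠ 0)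
    (hω' : ∀ t, deriv ω t = Real.sqrt ((deriv ζ t) ^ 2 * (sin (θ t)) ^ 2 + (deriv θ t) ^ 2))
    (hp' : ∀ t, deriv p t = sin (ω t) / (sin (ζ t) * sin (θ t)))
    (hq' : ∀ t, deriv q t = cos (ω t) / (sin (ζ t) * sin (θ t))) :
    ∀ t s : ℝ,
      ‖deriv (fun t' => eulerG ω p q (t', s)) t‖ ^ 2 =
        1 / ((sin (ζ t)) ^ 2 * (sin (θ t)) ^ 2) +
          s ^ 2 * ((deriv ζ t) ^ 2 * (sin (θ t)) ^ 2 + (deriv θ t) ^ 2) ∧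
      (⟪deriv (fun t' => eulerG ω p q (t', s)) t,
         deriv (fun s' => eulerG ω p q (t, s')) s⟫ : ℝ) =
        -1 / (sin (ζ t) * sin (θ t)) ∧
      ‖deriv (fun s' => eulerG ω p q (t, s')) s‖ = 1 :=
  euler_first_fundamental_form_of_unfolded_figure_general ζ θ ω p q hω hp hq hω' hp' hq'
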